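/- arXiv:2306.15524 — 3 statements merged into one kernel-verified Lean document; each statement's English description precedes it below -/
import Mathlib

section
/- Let α ∈ (0,1), δ > 0, ρ ∈ ℝ, and take the cost c(u,w) = ‖u − w‖₂ (κ = 1). Then the optimal value of the robust mean-CVaR problem, inf over (π, a) ∈ ℝⁿ × ℝ with inf_{P ∈ U_δ(Q)} E_P[⟪π, R⟫] ≥ ρ and ⟪π, 𝟏⟫ = 1, of sup over P ∈ U_δ(Q) of { a + (1/α) E_P[ max(−⟪π, R⟫ − a, 0) ] }, equals the optimal value of the finite-dimensional problem: inf over (π, a) with (1/N) Σ_{i=1}^N ⟪π, Rᵢ⟫ − δ‖π‖₂ ≥ ρ and ⟪π, 𝟏⟫ = 1, of a + (1/α) ( (1/N) Σ_{i=1}^N max(−⟪π, Rᵢ⟫ − a, 0) + δ‖π‖₂ ). -/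
open MeasureTheory
open scoped ENNReal RealInnerProductSpace BigOperators

noncomputable def transportCost {n : ℕ}
    (c : EuclideanSpace ℝ (Fin n) → EuclideanSpace ℝ (Fin n) → ℝ≥0∞)
    (μ ν : Measure (EuclideanSpace ℝ (Fin n))) : ℝ≥0∞ :=
  ⨅ (γ : Measure (EuclideanSpace ℝ (Fin n) × EuclideanSpace ℝ (Fin n)))
    (_ : γ.map Prod.fst = μ) (_ : γ.map Prod.snd = ν),
    ∫⁻ p, c p.1 p.2 ∂γ

noncomputable def empirical {n N : ℕ} (R : Fin N → EuclideanSpace ℝ (Fin n)) :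
    Measure (EuclideanSpace ℝ (Fin n)) :=
  (N : ℝ≥0∞)⁻¹ • ∑ i, Measure.dirac (R i)

/-!
Fix `(π, a)`; the two problems then have the same feasibility condition and the same objective,
because for a function `g` that is `‖π‖`-Lipschitz and grows at rate `‖π‖` in the direction `-π`
(here `-⟪π, x⟫` and `max (-⟪π, x⟫ - a) 0`) the supremum of `E_P g` over `U_δ(Q)` is
`E_Q g + ‖π‖ δ`. The upper bound integrates `g x ≤ g y + ‖π‖ ‖x - y‖` against a nearly optimal
coupling. For the lower bound, view `Q` as the empirical measure of its atoms each repeated `k`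
times and move one of these `N k` atoms by the distance `N k δ` in the direction `-π`: this costs
`δ` and raises `E g` by `‖π‖ δ - O(1/k)`.
-/

open Set Filter Topology
open scoped NNReal

namespace EReal

theorem biSup_coe_eq_of_isLUB {ι : Type*} {f : ι → ℝ} {s : Set ι} {a : ℝ}
    (h : IsLUB (f '' s) a) : ⨆ i ∈ s, (f i : EReal) = a := by
  refine le_antisymm (iSup₂_le fun i hi => EReal.coe_le_coe_iff.2 (h.1 (mem_image_of_mem f hi))) ?_
  refine le_of_forall_lt fun c hc => ?_
  obtain ⟨r, hcr, hra⟩ := EReal.lt_iff_exists_real_btwn.1 hc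
  obtain ⟨_, ⟨i, hi, rfl⟩, hri⟩ := (lt_isLUB_iff h).1 (EReal.coe_lt_coe_iff.1 hra)
  exact hcr.trans_le ((EReal.coe_le_coe_iff.2 hri.le).trans (le_iSup₂_of_le i hi le_rfl))

theorem biInf_coe_eq_of_isGLB {ι : Type*} {f : ι → ℝ} {s : Set ι} {a : ℝ}
    (h : IsGLB (f '' s) a) : ⨅ i ∈ s, (f i : EReal) = a := by
  refine le_antisymm ?_ (le_iInf₂ fun i hi => EReal.coe_le_coe_iff.2 (h.1 (mem_image_of_mem f hi)))
  refine le_of_forall_gt fun c hc => ?_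
  obtain ⟨r, har, hrc⟩ := EReal.lt_iff_exists_real_btwn.1 hc
  obtain ⟨_, ⟨i, hi, rfl⟩, hir⟩ := (isGLB_lt_iff h).1 (EReal.coe_lt_coe_iff.1 har)
  exact (iInf₂_le_of_le i hi le_rfl).trans_lt ((EReal.coe_lt_coe_iff.2 hir).trans hrc)

end EReal

section Empirical

variable {n N : ℕ}

local notation "E" => EuclideanSpace ℝ (Fin n)

theorem isProbabilityMeasure_empirical (hN : N ≠ 0) (R : Fin N → E) :
    IsProbabilityMeasure (empirical R) :=
  ⟨by simp [empirical, ENNReal.inv_mul_cancel, hN]⟩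

theorem integrable_empirical (R : Fin N → E) (f : E → ℝ) : Integrable f (empirical R) := by
  rcases eq_or_ne N 0 with rfl | hN
  · simp [empirical]
  exact (integrable_finsetSum_measure.2 fun i _ => integrable_dirac enorm_lt_top).smul_measure
    (by simp [hN])

theorem integral_empirical (R : Fin N → E) (f : E → ℝ) :
    ∫ x, f x ∂(empirical R) = (N : ℝ)⁻¹ * ∑ i, f (R i) := by
  rw [empirical, integral_smul_measure,
    integral_finsetSum_measure fun i _ => integrable_dirac enorm_lt_top]
  simp

theorem empirical_comp_finProdFinEquiv_symm (R : Fin N → E) {k : ℕ} (hk : k ≠ 0) :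
    empirical (fun j : Fin (N * k) => R (finProdFinEquiv.symm j).1) = empirical R := by
  rw [empirical, empirical, ← finProdFinEquiv.sum_comp, Fintype.sum_prod_type]
  simp only [Equiv.symm_apply_apply, Finset.sum_const, Finset.card_univ, Fintype.card_fin,
    ← Finset.smul_sum, Nat.cast_mul]
  rw [← Nat.cast_smul_eq_nsmul ℝ≥0∞ k, smul_smul, ENNReal.mul_inv (by simp) (by simp), mul_assoc,
    ENNReal.inv_mul_cancel (by simpa) (by simp), mul_one]

theorem transportCost_empirical_le (c : E → E → ℝ≥0∞) (X Y : Fin N → E) :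
    transportCost c (empirical X) (empirical Y) ≤ (N : ℝ≥0∞)⁻¹ * ∑ i, c (X i) (Y i) := by
  let γ : Measure (E × E) := (N : ℝ≥0∞)⁻¹ • ∑ i, Measure.dirac (X i, Y i)
  have hmap {f : E × E → E} (hf : Measurable f) :
      γ.map f = (N : ℝ≥0∞)⁻¹ • ∑ i, Measure.dirac (f (X i, Y i)) := by
    rw [Measure.map_smul, ← Measure.mapₗ_apply_of_measurable hf, map_sum]
    simp [Measure.mapₗ_apply_of_measurable hf, Measure.map_dirac' hf]
  refine iInf_le_of_le γ <|
    iInf_le_of_le (hmap measurable_fst) <| iInf_le_of_le (hmap measurable_snd) ?_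
  simp [γ, lintegral_finsetSum_measure]

end Empirical

theorem lipschitzWith_neg_inner {F : Type*} [NormedAddCommGroup F] [InnerProductSpace ℝ F]
    (π : F) : LipschitzWith ‖π‖₊ fun x : F => -⟪π, x⟫ :=
  LipschitzWith.of_le_add_mul _ fun x y => by
    have := real_inner_le_norm π (y - x)
    rw [inner_sub_right, norm_sub_rev] at this
    rw [coe_nnnorm, dist_eq_norm]
    linarith

section Coupling

variable {F : Type*} [PseudoMetricSpace F] [MeasurableSpace F] [OpensMeasurableSpace F]
  {g : F → ℝ} {K : ℝ≥0} {P Q : Measure F} {γ : Measure (F × F)}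

theorem LipschitzWith.integrable_of_coupling (hg : LipschitzWith K g)
    (h₁ : γ.map Prod.fst = P) (h₂ : γ.map Prod.snd = Q) (hQ : Integrable g Q)
    (hγ : Integrable (fun p => dist p.1 p.2) γ) : Integrable g P := by
  have hgm := hg.continuous.measurable
  subst h₁ h₂
  rw [integrable_map_measure hgm.aestronglyMeasurable measurable_snd.aemeasurable] at hQ
  refine (integrable_map_measure hgm.aestronglyMeasurable measurable_fst.aemeasurable).2 ?_
  refine (hQ.norm.add (hγ.const_mul K)).mono' (hgm.comp measurable_fst).aestronglyMeasurable
    (ae_of_all _ fun p => ?_)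
  have h₁ := hg.le_add_mul p.1 p.2
  have h₂ := hg.le_add_mul p.2 p.1
  rw [dist_comm] at h₂
  simp only [Function.comp, Pi.add_apply, Real.norm_eq_abs, abs_le]
  constructor <;> linarith [neg_abs_le (g p.2), le_abs_self (g p.2)]

theorem LipschitzWith.integral_le_of_coupling (hg : LipschitzWith K g)
    (h₁ : γ.map Prod.fst = P) (h₂ : γ.map Prod.snd = Q) (hQ : Integrable g Q)
    (hγ : Integrable (fun p => dist p.1 p.2) γ) :
    ∫ x, g x ∂P ≤ ∫ x, g x ∂Q + K * ∫ p, dist p.1 p.2 ∂γ := by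
  have hP := hg.integrable_of_coupling h₁ h₂ hQ hγ
  have hgm := hg.continuous.measurable
  subst h₁ h₂
  rw [integrable_map_measure hgm.aestronglyMeasurable measurable_fst.aemeasurable] at hP
  rw [integrable_map_measure hgm.aestronglyMeasurable measurable_snd.aemeasurable] at hQ
  rw [integral_map measurable_fst.aemeasurable hgm.aestronglyMeasurable,
    integral_map measurable_snd.aemeasurable hgm.aestronglyMeasurable, ← integral_const_mul]
  exact (integral_mono hP (hQ.add (hγ.const_mul _)) fun p => hg.le_add_mul p.1 p.2).trans_eq
    (integral_add hQ (hγ.const_mul _))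

end Coupling

section WassersteinBall

variable {n N : ℕ}

local notation "E" => EuclideanSpace ℝ (Fin n)

def wassersteinBall (R : Fin N → E) (δ : ℝ) : Set (Measure E) :=
  {P | IsProbabilityMeasure P ∧
    transportCost (fun u w => ENNReal.ofReal ‖u - w‖) P (empirical R) ≤ ENNReal.ofReal δ}

theorem exists_coupling_integral_dist_lt {P Q : Measure E} {δ D : ℝ}
    (hPQ : transportCost (fun u w => ENNReal.ofReal ‖u - w‖) P Q ≤ ENNReal.ofReal δ)
    (hδ : 0 ≤ δ) (hδD : δ < D) :
    ∃ γ : Measure (E × E), γ.map Prod.fst = P ∧ γ.map Prod.snd = Q ∧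
      Integrable (fun p => dist p.1 p.2) γ ∧ ∫ p, dist p.1 p.2 ∂γ < D := by
  have hD : 0 < D := hδ.trans_lt hδD
  have hlt := hPQ.trans_lt ((ENNReal.ofReal_lt_ofReal_iff hD).2 hδD)
  simp only [transportCost, iInf_lt_iff, ← dist_eq_norm] at hlt
  obtain ⟨γ, h₁, h₂, hcost⟩ := hlt
  have hγ : Integrable (fun p : E × E => dist p.1 p.2) γ :=
    ⟨continuous_dist.aestronglyMeasurable,
      (hasFiniteIntegral_iff_ofReal (ae_of_all _ fun _ => dist_nonneg)).2
        (hcost.trans ENNReal.ofReal_lt_top)⟩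
  refine ⟨γ, h₁, h₂, hγ, ?_⟩
  rwa [← ENNReal.ofReal_lt_ofReal_iff hD,
    ofReal_integral_eq_lintegral_ofReal hγ (ae_of_all _ fun _ => dist_nonneg)]

theorem LipschitzWith.integrable_of_mem_wassersteinBall {R : Fin N → E} {δ : ℝ} {g : E → ℝ}
    {K : ℝ≥0} {P : Measure E} (hg : LipschitzWith K g) (hδ : 0 ≤ δ)
    (hP : P ∈ wassersteinBall R δ) : Integrable g P := by
  obtain ⟨γ, h₁, h₂, hγ, -⟩ := exists_coupling_integral_dist_lt hP.2 hδ (lt_add_one δ)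
  exact hg.integrable_of_coupling h₁ h₂ (integrable_empirical R g) hγ

theorem LipschitzWith.integral_le_of_mem_wassersteinBall {R : Fin N → E} {δ : ℝ} {g : E → ℝ}
    {K : ℝ≥0} {P : Measure E} (hg : LipschitzWith K g) (hδ : 0 ≤ δ)
    (hP : P ∈ wassersteinBall R δ) : ∫ x, g x ∂P ≤ ∫ x, g x ∂(empirical R) + K * δ := by
  refine le_of_forall_pos_le_add fun ε hε => ?_
  have hη : 0 < ε / (K + 1) := by positivity
  obtain ⟨γ, h₁, h₂, hγ, hcost⟩ :=
    exists_coupling_integral_dist_lt hP.2 hδ (lt_add_of_pos_right δ hη)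
  have hKε : (K : ℝ) * (ε / (K + 1)) ≤ ε := by
    rw [← mul_div_assoc, div_le_iff₀ (by positivity)]
    nlinarith [K.coe_nonneg]
  calc ∫ x, g x ∂P ≤ ∫ x, g x ∂(empirical R) + K * ∫ p, dist p.1 p.2 ∂γ :=
        hg.integral_le_of_coupling h₁ h₂ (integrable_empirical R g) hγ
    _ ≤ ∫ x, g x ∂(empirical R) + K * (δ + ε / (K + 1)) := by gcongr
    _ ≤ ∫ x, g x ∂(empirical R) + K * δ + ε := by linarith

theorem exists_mem_wassersteinBall_le_integral (R : Fin N → E) {δ : ℝ} (hδ : 0 ≤ δ)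
    {g : E → ℝ} {π : E} {b : ℝ} (hg : ∀ x, b - ⟪π, x⟫ ≤ g x) (i₀ : Fin N) {k : ℕ} (hk : k ≠ 0) :
    ∃ P ∈ wassersteinBall R δ, ∫ x, g x ∂(empirical R) + ‖π‖ * δ -
      (g (R i₀) - b + ⟪π, R i₀⟫) / (N * k) ≤ ∫ x, g x ∂P := by
  have hM : N * k ≠ 0 := Nat.mul_ne_zero i₀.pos.ne' hk
  have hMpos : (0 : ℝ) < N * k := by exact_mod_cast Nat.pos_of_ne_zero hM
  set R' : Fin (N * k) → E := fun j => R (finProdFinEquiv.symm j).1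
  set j₀ : Fin (N * k) := finProdFinEquiv (i₀, ⟨0, Nat.pos_of_ne_zero hk⟩)
  have hj₀ : R' j₀ = R i₀ := by simp only [R', j₀, Equiv.symm_apply_apply]
  -- for `π = 0` the junk value `‖π‖⁻¹ = 0` makes `v = R i₀`, which is still what is needed
  set v : E := R i₀ - ((N * k : ℝ) * δ * ‖π‖⁻¹) • π
  have hv : ⟪π, v⟫ = ⟪π, R i₀⟫ - (N * k : ℝ) * δ * ‖π‖ := by
    have : ‖π‖⁻¹ * ‖π‖ ^ 2 = ‖π‖ := by
      rcases eq_or_ne ‖π‖ 0 with h | h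
      · simp [h]
      · field_simp
    simp only [v, inner_sub_right, real_inner_smul_right, real_inner_self_eq_norm_sq]
    rw [mul_assoc _ ‖π‖⁻¹, this]
  have hdist : ‖v - R i₀‖ ≤ (N * k : ℝ) * δ := by
    simp only [v, sub_sub_cancel_left, norm_neg, norm_smul, Real.norm_eq_abs]
    rw [abs_of_nonneg (by positivity), mul_assoc]
    exact mul_le_of_le_one_right (by positivity) inv_mul_le_one
  have hQ : empirical R' = empirical R := empirical_comp_finProdFinEquiv_symm R hk
  refine ⟨empirical (Function.update R' j₀ v), ⟨isProbabilityMeasure_empirical hM _, ?_⟩, ?_⟩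
  · rw [← hQ]
    refine (transportCost_empirical_le _ _ _).trans ?_
    rw [Finset.sum_eq_single j₀ (fun j _ hj => by
        simp only [Function.update_of_ne hj, sub_self, norm_zero, ENNReal.ofReal_zero])
      (by simp), Function.update_self, hj₀,
      ← ENNReal.ofReal_natCast, ← ENNReal.ofReal_inv_of_pos (by exact_mod_cast hMpos),
      ← ENNReal.ofReal_mul (by positivity)]
    refine ENNReal.ofReal_le_ofReal ?_
    rw [inv_mul_le_iff₀ (by exact_mod_cast hMpos)]
    exact_mod_cast hdist
  · rw [← hQ, integral_empirical, integral_empirical]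
    have hsum : ∑ j, g (Function.update R' j₀ v j) = ∑ j, g (R' j) - g (R i₀) + g v := by
      simp only [Function.apply_update (fun _ => g), Finset.sum_update_of_mem (Finset.mem_univ j₀),
        Finset.sum_eq_add_sum_sdiff_singleton_of_mem (Finset.mem_univ j₀) (fun j => g (R' j)), hj₀]
      ring
    have hgv := hg v
    rw [hv] at hgv
    rw [hsum, Nat.cast_mul, div_eq_inv_mul]
    generalize ∑ j, g (R' j) = S
    generalize (N * k : ℝ) = M at hMpos hgv ⊢
    have hM₁ : M⁻¹ * (M * δ * ‖π‖) = δ * ‖π‖ := by field_simp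
    linarith [mul_le_mul_of_nonneg_left hgv (inv_nonneg.2 hMpos.le)]

theorem isLUB_integral_wassersteinBall (hN : 0 < N) (R : Fin N → E) {δ : ℝ} (hδ : 0 ≤ δ)
    {g : E → ℝ} {π : E} {b : ℝ} (hg : LipschitzWith ‖π‖₊ g) (hgπ : ∀ x, b - ⟪π, x⟫ ≤ g x) :
    IsLUB ((fun P => ∫ x, g x ∂P) '' wassersteinBall R δ)
      (∫ x, g x ∂(empirical R) + ‖π‖ * δ) := by
  refine ⟨?_, fun c hc => ?_⟩
  · rintro _ ⟨P, hP, rfl⟩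
    simpa using hg.integral_le_of_mem_wassersteinBall hδ hP
  set i₀ : Fin N := ⟨0, hN⟩
  have hlim : Tendsto (fun k : ℕ => ∫ x, g x ∂(empirical R) + ‖π‖ * δ -
      (g (R i₀) - b + ⟪π, R i₀⟫) / N / k) atTop (𝓝 (∫ x, g x ∂(empirical R) + ‖π‖ * δ)) := by
    simpa using tendsto_const_nhds.sub
      (tendsto_const_div_atTop_nhds_zero_nat ((g (R i₀) - b + ⟪π, R i₀⟫) / N))
  refine le_of_tendsto hlim ((eventually_ne_atTop 0).mono fun k hk => ?_)
  obtain ⟨P, hP, hle⟩ := exists_mem_wassersteinBall_le_integral R hδ hgπ i₀ hk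
  rw [div_div]
  exact hle.trans (hc ⟨P, hP, rfl⟩)

theorem iInf_integral_inner_wassersteinBall (hN : 0 < N) (R : Fin N → E) {δ : ℝ} (hδ : 0 ≤ δ)
    (π : E) :
    ⨅ P ∈ wassersteinBall R δ, ((∫ x, ⟪π, x⟫ ∂P : ℝ) : EReal) =
      (((N : ℝ)⁻¹ * ∑ i, ⟪π, R i⟫ - δ * ‖π‖ : ℝ) : EReal) := by
  have hg : LipschitzWith ‖π‖₊ fun x : E => -⟪π, x⟫ := lipschitzWith_neg_inner π
  have h := isLUB_integral_wassersteinBall hN R hδ hg (b := 0) fun x => by simp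
  simp only [integral_neg, integral_empirical] at h
  refine EReal.biInf_coe_eq_of_isGLB ?_
  rwa [← isLUB_neg', ← Set.image_neg_eq_neg, image_image, neg_sub, sub_eq_neg_add, mul_comm δ]

theorem iSup_cvar_wassersteinBall (hN : 0 < N) (R : Fin N → E) {δ : ℝ} (hδ : 0 ≤ δ) (π : E)
    (a : ℝ) {α : ℝ} (hα : 0 < α) :
    ⨆ P ∈ wassersteinBall R δ, ((a : EReal) + ((α⁻¹ : ℝ) : EReal) *
        ((∫⁻ x, ENNReal.ofReal (max (-⟪π, x⟫ - a) 0) ∂P : ℝ≥0∞) : EReal)) =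
      ((a + α⁻¹ * ((N : ℝ)⁻¹ * ∑ i, max (-⟪π, R i⟫ - a) 0 + δ * ‖π‖) : ℝ) : EReal) := by
  set g : E → ℝ := fun x => max (-⟪π, x⟫ - a) 0
  have hg : LipschitzWith ‖π‖₊ g := by
    simpa using ((lipschitzWith_neg_inner π).sub (LipschitzWith.const a)).max_const 0
  have hg₀ : ∀ x, 0 ≤ g x := fun x => le_max_right _ _
  have hbody (P) (hP : P ∈ wassersteinBall R δ) :
      (a : EReal) + ((α⁻¹ : ℝ) : EReal) * ((∫⁻ x, ENNReal.ofReal (g x) ∂P : ℝ≥0∞) : EReal) =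
        ((a + α⁻¹ * ∫ x, g x ∂P : ℝ) : EReal) := by
    rw [← ofReal_integral_eq_lintegral_ofReal (hg.integrable_of_mem_wassersteinBall hδ hP)
      (ae_of_all _ hg₀), EReal.coe_ennreal_ofReal, max_eq_left (integral_nonneg hg₀)]
    rfl
  rw [biSup_congr hbody]
  refine EReal.biSup_coe_eq_of_isLUB ?_
  have h := isLUB_integral_wassersteinBall hN R hδ hg (b := -a)
    fun x => le_max_of_le_left (by linarith)
  have key : IsLUB ((fun P => a + α⁻¹ * ∫ x, g x ∂P) '' wassersteinBall R δ)
      (a + α⁻¹ * (∫ x, g x ∂(empirical R) + ‖π‖ * δ)) := by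
    simpa [image_image] using
      ((OrderIso.mulLeft₀ α⁻¹ (inv_pos.2 hα)).trans (OrderIso.addLeft a)).isLUB_image'.2 h
  rwa [integral_empirical, mul_comm ‖π‖] at key

end WassersteinBall

/-- Proposition 4.1 (RMC-1): duality for the robust mean-CVaR problem with cost
`c(u,w) = ‖u − w‖₂` (i.e. `κ = 1`). -/
theorem robust_meanCVaR_dual_k1 (n N : ℕ) (hN : 0 < N)
    (R : Fin N → EuclideanSpace ℝ (Fin n))
    (α δ ρ : ℝ) (hα : α ∈ Set.Ioo (0:ℝ) 1) (hδ : 0 < δ)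
    -- the ambiguity set `U_δ(Q)`
    (U : Set (Measure (EuclideanSpace ℝ (Fin n))))
    (hU : U = {P | IsProbabilityMeasure P ∧
        transportCost (fun u w => ENNReal.ofReal ‖u - w‖) P (empirical R)
          ≤ ENNReal.ofReal δ}) :
    -- primal robust mean-CVaR value
    (⨅ (π : EuclideanSpace ℝ (Fin n)) (a : ℝ)
        (_ : (ρ : EReal) ≤ ⨅ P ∈ U, ((∫ x, ⟪π, x⟫ ∂P : ℝ) : EReal))
        (_ : ⟪π, (WithLp.toLp 2 (fun _ => (1:ℝ)) : EuclideanSpace ℝ (Fin n))⟫ = 1),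
        ⨆ P ∈ U,
          ((a : ℝ) : EReal) +
            ((α⁻¹ : ℝ) : EReal) *
              ((∫⁻ x, ENNReal.ofReal (max (-⟪π, x⟫ - a) 0) ∂P : ℝ≥0∞) : EReal)) =
    -- dual finite-dimensional value
    (⨅ (π : EuclideanSpace ℝ (Fin n)) (a : ℝ)
        (_ : ρ ≤ (N : ℝ)⁻¹ * ∑ i : Fin N, ⟪π, R i⟫ - δ * ‖π‖)
        (_ : ⟪π, (WithLp.toLp 2 (fun _ => (1:ℝ)) : EuclideanSpace ℝ (Fin n))⟫ = 1),
        ((a + α⁻¹ * ((N : ℝ)⁻¹ * (∑ i : Fin N, max (-⟪π, R i⟫ - a) 0) + δ * ‖π‖) : ℝ)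
          : EReal)) := by
  have hU' : U = wassersteinBall R δ := hU
  subst hU'
  refine iInf_congr fun π => iInf_congr fun a => ?_
  rw [iInf_integral_inner_wassersteinBall hN R hδ.le π,
    iSup_cvar_wassersteinBall hN R hδ.le π a hα.1, EReal.coe_le_coe_iff]
end

section
/- Let π ∈ ℝⁿ, a ∈ ℝ, δ > 0, and take the cost c(u,w) = ‖u − w‖₂. Then sup over probability measures P on ℝⁿ with C(P,Q) ≤ δ of E_P[ max(−⟪π, R⟫ − a, 0) ] equals (1/N) Σ_{i=1}^N max(−⟪π, Rᵢ⟫ − a, 0) + δ‖π‖₂. -/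
open MeasureTheory
open scoped ENNReal RealInnerProductSpace BigOperators

open scoped NNReal

/-! The loss `ℓ x = (-⟪π, x⟫ - a)⁺` is `‖π‖`-Lipschitz, so integrating
`ℓ u ≤ ℓ w + ‖π‖ ‖u - w‖` against a coupling of `P` and `Q` gives
`E_P ℓ ≤ E_Q ℓ + ‖π‖ C(P, Q) ≤ E_Q ℓ + δ ‖π‖`. Conversely, moving mass `τ` of `Q` from an atom `x`
a distance `δ / τ` in the direction `-π` costs at most `δ` and raises the expectation by at least
`δ ‖π‖ - τ (ℓ x + ⟪π, x⟫ + a)`: the only loss is the truncation of `ℓ` at `x`, and it vanishes as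
`τ → 0`. -/

theorem EReal.iSup_coe_ennreal_eq_of_forall_pos_le_add {ι : Type*} {p q : ι → Prop} {f : ι → ℝ≥0∞}
    {s : ℝ≥0∞} (hle : ∀ i, p i → q i → f i ≤ s)
    (hge : ∀ ε : ℝ≥0, 0 < ε → ∃ i, p i ∧ q i ∧ s ≤ f i + ε) :
    ⨆ (i) (_ : p i) (_ : q i), (f i : EReal) = s := by
  have hle_sup i (hp : p i) (hq : q i) : (f i : EReal) ≤ ⨆ (i) (_ : p i) (_ : q i), (f i : EReal) :=
    le_iSup₂_of_le i hp (le_iSup_of_le hq le_rfl)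
  refine le_antisymm (iSup₂_le fun i hp => iSup_le fun hq =>
    EReal.coe_ennreal_le_coe_ennreal_iff.2 (hle i hp hq)) ?_
  -- an empty inner supremum is `⊥` in `EReal`, so compare in `ℝ≥0∞` after `toENNReal`
  obtain ⟨i, hp, hq, -⟩ := hge 1 one_pos
  rw [← EReal.coe_toENNReal ((EReal.coe_ennreal_nonneg _).trans (hle_sup i hp hq)),
    EReal.coe_ennreal_le_coe_ennreal_iff]
  refine ENNReal.le_of_forall_pos_le_add fun ε hε _ => ?_
  obtain ⟨i, hp, hq, hs⟩ := hge ε hε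
  refine hs.trans (add_le_add_left ?_ _)
  simpa only [EReal.toENNReal_coe] using EReal.toENNReal_le_toENNReal (hle_sup i hp hq)

section Coupling

variable {E : Type*} [SeminormedAddCommGroup E] [MeasurableSpace E] [OpensMeasurableSpace E]

theorem lintegral_ofReal_le_add_mul_of_coupling {f : E → ℝ} {K : ℝ≥0} (hf : LipschitzWith K f)
    {μ ν : Measure E} {γ : Measure (E × E)} (hμ : γ.map Prod.fst = μ) (hν : γ.map Prod.snd = ν) :
    ∫⁻ x, ENNReal.ofReal (f x) ∂μ
      ≤ ∫⁻ x, ENNReal.ofReal (f x) ∂ν + K * ∫⁻ p, ENNReal.ofReal ‖p.1 - p.2‖ ∂γ := by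
  have hmeas : Measurable fun x => ENNReal.ofReal (f x) :=
    ENNReal.measurable_ofReal.comp hf.continuous.measurable
  have hpoint (p : E × E) :
      ENNReal.ofReal (f p.1) ≤ ENNReal.ofReal (f p.2) + K * ENNReal.ofReal ‖p.1 - p.2‖ := by
    calc ENNReal.ofReal (f p.1) ≤ ENNReal.ofReal (f p.2 + K * ‖p.1 - p.2‖) := by
          rw [← dist_eq_norm]; exact ENNReal.ofReal_le_ofReal (hf.le_add_mul p.1 p.2)
      _ ≤ _ := by
          rw [← ENNReal.ofReal_coe_nnreal, ← ENNReal.ofReal_mul K.coe_nonneg]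
          exact ENNReal.ofReal_add_le
  rw [← hμ, ← hν, lintegral_map hmeas measurable_fst, lintegral_map hmeas measurable_snd,
    ← lintegral_const_mul' _ _ ENNReal.coe_ne_top,
    ← lintegral_add_left (f := fun p : E × E => ENNReal.ofReal (f p.2))
      (hmeas.comp measurable_snd)]
  exact lintegral_mono hpoint

end Coupling

section Shortfall

variable {F : Type*} [NormedAddCommGroup F] [InnerProductSpace ℝ F]

def shortfall (π : F) (a : ℝ) (x : F) : ℝ := max (-⟪π, x⟫ - a) 0

theorem shortfall_nonneg (π : F) (a : ℝ) (x : F) : 0 ≤ shortfall π a x := le_max_right _ _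

theorem lipschitzWith_shortfall (π : F) (a : ℝ) : LipschitzWith ‖π‖₊ (shortfall π a) := by
  refine LipschitzWith.of_le_add_mul _ fun x y => ?_
  have h : ⟪π, y - x⟫ ≤ ‖π‖ * dist x y := by
    rw [dist_comm, dist_eq_norm]; exact real_inner_le_norm _ _
  rw [inner_sub_right] at h
  rw [coe_nnnorm]
  unfold shortfall
  exact max_le (by linarith [le_max_left (-⟪π, y⟫ - a) 0])
    (add_nonneg (le_max_right _ _) (by positivity))

theorem exists_norm_le_inner_eq (π : F) {r : ℝ} (hr : 0 ≤ r) :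
    ∃ v : F, ‖v‖ ≤ r ∧ ⟪π, v⟫ = r * ‖π‖ := by
  rcases eq_or_ne π 0 with rfl | hπ
  · exact ⟨0, by simpa using hr, by simp⟩
  · have hπ' : ‖π‖ ≠ 0 := norm_ne_zero_iff.mpr hπ
    refine ⟨(r / ‖π‖) • π, ?_, ?_⟩
    · rw [norm_smul, Real.norm_of_nonneg (by positivity), div_mul_cancel₀ _ hπ']
    · rw [real_inner_smul_right, real_inner_self_eq_norm_sq]
      field_simp

theorem mul_shortfall_add_le_mul_shortfall_sub_add (π x v : F) (a : ℝ) {τ δ : ℝ} (hτ : 0 < τ)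
    (hπv : ⟪π, v⟫ = δ / τ * ‖π‖) :
    τ * shortfall π a x + δ * ‖π‖
      ≤ τ * shortfall π a (x - v) + τ * (shortfall π a x - (-⟪π, x⟫ - a)) :=
  calc τ * shortfall π a x + δ * ‖π‖
      = τ * (-⟪π, x - v⟫ - a) + τ * (shortfall π a x - (-⟪π, x⟫ - a)) := by
        rw [inner_sub_right, hπv]; field_simp; ring
    _ ≤ _ := by gcongr; exact le_max_left _ _

end Shortfall

theorem isProbabilityMeasure_add_smul_dirac {α : Type*} [MeasurableSpace α] {ρ : Measure α}
    {τ : ℝ≥0∞} (x y : α) [IsProbabilityMeasure (ρ + τ • Measure.dirac x)] :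
    IsProbabilityMeasure (ρ + τ • Measure.dirac y) := by
  constructor
  have h : (ρ + τ • Measure.dirac x) Set.univ = 1 := measure_univ
  rw [Measure.add_apply, Measure.smul_apply, measure_univ (μ := Measure.dirac x)] at h
  rwa [Measure.add_apply, Measure.smul_apply, measure_univ (μ := Measure.dirac y)]

section Euclidean

variable {n N : ℕ}

local notation "ℝⁿ" => EuclideanSpace ℝ (Fin n)

local notation "W₁" => transportCost (fun u w => ENNReal.ofReal ‖u - w‖)

theorem transportCost_le_lintegral (c : ℝⁿ → ℝⁿ → ℝ≥0∞) {μ ν : Measure ℝⁿ}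
    {γ : Measure (ℝⁿ × ℝⁿ)} (hμ : γ.map Prod.fst = μ) (hν : γ.map Prod.snd = ν) :
    transportCost c μ ν ≤ ∫⁻ p, c p.1 p.2 ∂γ :=
  (iInf₂_le γ hμ).trans (iInf_le _ hν)

theorem lintegral_ofReal_le_add_mul_transportCost {f : ℝⁿ → ℝ} {K : ℝ≥0}
    (hf : LipschitzWith K f) {μ ν : Measure ℝⁿ} (hμν : W₁ μ ν ≠ ⊤) :
    ∫⁻ x, ENNReal.ofReal (f x) ∂μ ≤ ∫⁻ x, ENNReal.ofReal (f x) ∂ν + K * W₁ μ ν := by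
  rcases eq_or_ne K 0 with rfl | hK
  · obtain ⟨γ, hμ, hν, -⟩ : ∃ γ, _ ∧ _ ∧ _ := by
      simpa only [transportCost, iInf_lt_iff, exists_prop] using hμν.lt_top
    simpa using lintegral_ofReal_le_add_mul_of_coupling hf hμ hν
  · simp only [transportCost, ENNReal.mul_iInf_of_ne (by simpa) ENNReal.coe_ne_top,
      ENNReal.add_iInf]
    exact le_iInf fun γ => le_iInf fun hμ => le_iInf fun hν =>
      lintegral_ofReal_le_add_mul_of_coupling hf hμ hν

theorem transportCost_add_smul_dirac_le (c : ℝⁿ → ℝⁿ → ℝ≥0∞) (hc : ∀ u, c u u = 0)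
    (ρ : Measure ℝⁿ) (τ : ℝ≥0∞) (x y : ℝⁿ) :
    transportCost c (ρ + τ • Measure.dirac y) (ρ + τ • Measure.dirac x) ≤ τ * c y x := by
  have hdiag : Measurable fun u : ℝⁿ => (u, u) := by fun_prop
  refine (transportCost_le_lintegral c (γ := ρ.map (fun u => (u, u)) + τ • Measure.dirac (y, x))
    ?_ ?_).trans ?_
  · simp [Measure.map_add _ _ measurable_fst, Measure.map_smul,
      Measure.map_map measurable_fst hdiag, Measure.map_dirac' measurable_fst, Function.comp_def]
  · simp [Measure.map_add _ _ measurable_snd, Measure.map_smul,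
      Measure.map_map measurable_snd hdiag, Measure.map_dirac' measurable_snd, Function.comp_def]
  · rw [lintegral_add_measure, lintegral_smul_measure, lintegral_dirac]
    calc ∫⁻ p, c p.1 p.2 ∂ρ.map (fun u => (u, u)) + τ * c y x
        ≤ ∫⁻ u, c u u ∂ρ + τ * c y x := by gcongr; exact lintegral_map_le _ _
      _ = τ * c y x := by simp [hc]

instance isProbabilityMeasure_empirical_s6 [NeZero N] (R : Fin N → ℝⁿ) :
    IsProbabilityMeasure (empirical R) := by
  constructor
  simp [empirical, ENNReal.inv_mul_cancel (NeZero.ne (N : ℝ≥0∞)) (ENNReal.natCast_ne_top N)]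

theorem lintegral_empirical (R : Fin N → ℝⁿ) (g : ℝⁿ → ℝ≥0∞) :
    ∫⁻ x, g x ∂empirical R = (N : ℝ≥0∞)⁻¹ * ∑ i, g (R i) := by
  simp [empirical]

theorem lintegral_ofReal_empirical (hN : 0 < N) (R : Fin N → ℝⁿ) {f : ℝⁿ → ℝ} (hf : 0 ≤ f) :
    ∫⁻ x, ENNReal.ofReal (f x) ∂empirical R = ENNReal.ofReal ((N : ℝ)⁻¹ * ∑ i, f (R i)) := by
  rw [lintegral_empirical, ENNReal.ofReal_mul (by positivity),
    ENNReal.ofReal_sum_of_nonneg fun i _ => hf (R i),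
    ENNReal.ofReal_inv_of_pos (by exact_mod_cast hN), ENNReal.ofReal_natCast]

theorem smul_dirac_le_empirical (R : Fin N → ℝⁿ) (i : Fin N) {τ : ℝ≥0∞}
    (hτ : τ ≤ (N : ℝ≥0∞)⁻¹) : τ • Measure.dirac (R i) ≤ empirical R :=
  calc τ • Measure.dirac (R i) ≤ (N : ℝ≥0∞)⁻¹ • Measure.dirac (R i) :=
        IsOrderedSMul.smul_le_smul_right _ _ hτ _
    _ ≤ empirical R := IsOrderedSMul.smul_le_smul_left _ _
        (Finset.single_le_sum (f := fun j => Measure.dirac (R j)) (fun _ _ => bot_le)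
          (Finset.mem_univ i)) _

theorem exists_transportCost_le_lintegral_add_eq [NeZero N] (R : Fin N → ℝⁿ) (i : Fin N)
    {τ : ℝ≥0∞} (hτ : τ ≤ (N : ℝ≥0∞)⁻¹) (y : ℝⁿ) :
    ∃ P : Measure ℝⁿ, IsProbabilityMeasure P ∧ W₁ P (empirical R) ≤ τ * ENNReal.ofReal ‖y - R i‖ ∧
      ∀ g : ℝⁿ → ℝ≥0∞, ∫⁻ z, g z ∂P + τ * g (R i) = ∫⁻ z, g z ∂empirical R + τ * g y := by
  have : IsFiniteMeasure (τ • Measure.dirac (R i)) :=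
    (Measure.dirac (R i)).smul_finite (ne_top_of_le_ne_top (by simp [NeZero.ne N]) hτ)
  set ρ := empirical R - τ • Measure.dirac (R i)
  have hρ : ρ + τ • Measure.dirac (R i) = empirical R :=
    Measure.sub_add_cancel_of_le (smul_dirac_le_empirical R i hτ)
  have : IsProbabilityMeasure (ρ + τ • Measure.dirac (R i)) := hρ ▸ inferInstance
  refine ⟨ρ + τ • Measure.dirac y, isProbabilityMeasure_add_smul_dirac (R i) y,
    hρ ▸ transportCost_add_smul_dirac_le _ (by simp) ρ τ (R i) y, fun g => ?_⟩
  rw [← hρ]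
  simp only [lintegral_add_measure, lintegral_smul_measure, lintegral_dirac, smul_eq_mul]
  ring

theorem lintegral_ofReal_le_of_transportCost_le (hN : 0 < N) (R : Fin N → ℝⁿ) {f : ℝⁿ → ℝ}
    {K : ℝ≥0} (hf : LipschitzWith K f) (hf₀ : 0 ≤ f) {δ : ℝ} (hδ : 0 ≤ δ) {P : Measure ℝⁿ}
    (hP : W₁ P (empirical R) ≤ ENNReal.ofReal δ) :
    ∫⁻ x, ENNReal.ofReal (f x) ∂P ≤ ENNReal.ofReal ((N : ℝ)⁻¹ * ∑ i, f (R i) + δ * K) :=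
  calc ∫⁻ x, ENNReal.ofReal (f x) ∂P
      ≤ ∫⁻ x, ENNReal.ofReal (f x) ∂empirical R + K * W₁ P (empirical R) :=
        lintegral_ofReal_le_add_mul_transportCost hf (ne_top_of_le_ne_top ENNReal.ofReal_ne_top hP)
    _ ≤ ENNReal.ofReal ((N : ℝ)⁻¹ * ∑ i, f (R i)) + K * ENNReal.ofReal δ := by
        rw [lintegral_ofReal_empirical hN R hf₀]; gcongr
    _ = _ := by
        rw [ENNReal.ofReal_add (mul_nonneg (by positivity) (Finset.sum_nonneg fun i _ => hf₀ _))
          (by positivity), ENNReal.ofReal_mul hδ, ENNReal.ofReal_coe_nnreal, mul_comm (K : ℝ≥0∞)]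

theorem exists_transportCost_le_and_le_lintegral_shortfall_add_mul (hN : 0 < N)
    (R : Fin N → ℝⁿ) (i : Fin N) (π : ℝⁿ) (a : ℝ) {δ τ : ℝ} (hδ : 0 ≤ δ) (hτ : 0 < τ)
    (hτN : τ ≤ (N : ℝ)⁻¹) :
    ∃ P : Measure ℝⁿ, IsProbabilityMeasure P ∧ W₁ P (empirical R) ≤ ENNReal.ofReal δ ∧
      ENNReal.ofReal ((N : ℝ)⁻¹ * ∑ j, shortfall π a (R j) + δ * ‖π‖)
        ≤ ∫⁻ z, ENNReal.ofReal (shortfall π a z) ∂P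
          + ENNReal.ofReal (τ * (shortfall π a (R i) - (-⟪π, R i⟫ - a))) := by
  have : NeZero N := ⟨hN.ne'⟩
  set x := R i
  set C := shortfall π a x - (-⟪π, x⟫ - a)
  have hC : 0 ≤ C := sub_nonneg.2 (le_max_left _ _)
  have hτN' : ENNReal.ofReal τ ≤ (N : ℝ≥0∞)⁻¹ := by
    rw [← ENNReal.ofReal_natCast, ← ENNReal.ofReal_inv_of_pos (by positivity)]
    exact ENNReal.ofReal_le_ofReal hτN
  obtain ⟨v, hv, hπv⟩ := exists_norm_le_inner_eq π (div_nonneg hδ hτ.le)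
  obtain ⟨P, hP, hcost, hmove⟩ := exists_transportCost_le_lintegral_add_eq R i hτN' (x - v)
  refine ⟨P, hP, hcost.trans ?_, ?_⟩
  · rw [← ENNReal.ofReal_mul hτ.le]
    refine ENNReal.ofReal_le_ofReal ?_
    calc τ * ‖x - v - x‖ = τ * ‖v‖ := by rw [sub_sub_cancel_left, norm_neg]
      _ ≤ τ * (δ / τ) := by gcongr
      _ = δ := mul_div_cancel₀ _ hτ.ne'
  have hgain : ENNReal.ofReal τ * ENNReal.ofReal (shortfall π a x) + ENNReal.ofReal (δ * ‖π‖)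
      ≤ ENNReal.ofReal τ * ENNReal.ofReal (shortfall π a (x - v)) + ENNReal.ofReal (τ * C) := by
    have := shortfall_nonneg π a
    rw [← ENNReal.ofReal_mul hτ.le, ← ENNReal.ofReal_mul hτ.le,
      ← ENNReal.ofReal_add (mul_nonneg hτ.le (this x)) (by positivity),
      ← ENNReal.ofReal_add (mul_nonneg hτ.le (this _)) (mul_nonneg hτ.le hC)]
    exact ENNReal.ofReal_le_ofReal (mul_shortfall_add_le_mul_shortfall_sub_add π x v a hτ hπv)
  -- the mass taken off `x` is added back on both sides, as `ℝ≥0∞` has no subtraction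
  refine ENNReal.le_of_add_le_add_right
    (a := ENNReal.ofReal τ * ENNReal.ofReal (shortfall π a x)) (by finiteness) ?_
  calc ENNReal.ofReal ((N : ℝ)⁻¹ * ∑ j, shortfall π a (R j) + δ * ‖π‖)
        + ENNReal.ofReal τ * ENNReal.ofReal (shortfall π a x)
      = ∫⁻ z, ENNReal.ofReal (shortfall π a z) ∂empirical R
        + (ENNReal.ofReal τ * ENNReal.ofReal (shortfall π a x) + ENNReal.ofReal (δ * ‖π‖)) := by
        rw [ENNReal.ofReal_add (mul_nonneg (by positivity)
            (Finset.sum_nonneg fun j _ => shortfall_nonneg π a _)) (by positivity),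
          lintegral_ofReal_empirical hN R (f := shortfall π a) (shortfall_nonneg π a)]
        ring
    _ ≤ ∫⁻ z, ENNReal.ofReal (shortfall π a z) ∂empirical R
        + (ENNReal.ofReal τ * ENNReal.ofReal (shortfall π a (x - v)) + ENNReal.ofReal (τ * C)) := by
        gcongr
    _ = ∫⁻ z, ENNReal.ofReal (shortfall π a z) ∂P + ENNReal.ofReal (τ * C)
        + ENNReal.ofReal τ * ENNReal.ofReal (shortfall π a x) := by
        rw [← add_assoc, ← hmove]; ring

theorem exists_transportCost_le_and_le_lintegral_shortfall_add (hN : 0 < N) (R : Fin N → ℝⁿ)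
    (π : ℝⁿ) (a : ℝ) {δ : ℝ} (hδ : 0 ≤ δ) {ε : ℝ≥0} (hε : 0 < ε) :
    ∃ P : Measure ℝⁿ, IsProbabilityMeasure P ∧ W₁ P (empirical R) ≤ ENNReal.ofReal δ ∧
      ENNReal.ofReal ((N : ℝ)⁻¹ * ∑ i, shortfall π a (R i) + δ * ‖π‖)
        ≤ ∫⁻ x, ENNReal.ofReal (shortfall π a x) ∂P + ε := by
  set i : Fin N := ⟨0, hN⟩
  set C := shortfall π a (R i) - (-⟪π, R i⟫ - a)
  have hC : 0 ≤ C := sub_nonneg.2 (le_max_left _ _)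
  obtain ⟨c, hc, hcC⟩ := exists_pos_mul_lt (show (0 : ℝ) < ε from hε) C
  obtain ⟨P, hP, hcost, hle⟩ := exists_transportCost_le_and_le_lintegral_shortfall_add_mul hN R i
    π a hδ (lt_min (by positivity) hc) (min_le_left _ c)
  refine ⟨P, hP, hcost, hle.trans (add_le_add_right ?_ _)⟩
  rw [← ENNReal.ofReal_coe_nnreal]
  refine ENNReal.ofReal_le_ofReal ?_
  nlinarith [min_le_right (N : ℝ)⁻¹ c]

end Euclidean

/-- Inner worst-case expectation identity for `κ = 1` (from the proof of the RMC-1 part of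
Proposition 4.1): `sup_{P : C(P,Q) ≤ δ} E_P[(−⟪π, R⟫ − a)⁺] = (1/N) ∑ᵢ (−⟪π, Rᵢ⟫ − a)⁺ + δ‖π‖₂`,
with the cost `c(u,w) = ‖u − w‖₂`. -/
theorem worst_case_positive_part_k1 (n N : ℕ) (hN : 0 < N)
    (R : Fin N → EuclideanSpace ℝ (Fin n))
    (π : EuclideanSpace ℝ (Fin n)) (a δ : ℝ) (hδ : 0 < δ) :
    (⨆ (P : Measure (EuclideanSpace ℝ (Fin n)))
        (_ : IsProbabilityMeasure P)
        (_ : transportCost (fun u w => ENNReal.ofReal ‖u - w‖) P (empirical R)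
          ≤ ENNReal.ofReal δ),
        ((∫⁻ x, ENNReal.ofReal (max (-⟪π, x⟫ - a) 0) ∂P : ℝ≥0∞) : EReal)) =
    (((N : ℝ)⁻¹ * (∑ i : Fin N, max (-⟪π, R i⟫ - a) 0) + δ * ‖π‖ : ℝ) : EReal) := by
  simp only [← shortfall.eq_1]
  set S := (N : ℝ)⁻¹ * (∑ i : Fin N, shortfall π a (R i)) + δ * ‖π‖
  have hS : 0 ≤ S :=
    add_nonneg (mul_nonneg (by positivity) (Finset.sum_nonneg fun i _ => shortfall_nonneg π a _))
      (by positivity)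
  rw [← max_eq_left hS, ← EReal.coe_ennreal_ofReal]
  refine EReal.iSup_coe_ennreal_eq_of_forall_pos_le_add (fun P _ hc => ?_)
    (fun ε hε => exists_transportCost_le_and_le_lintegral_shortfall_add hN R π a hδ.le hε)
  simpa only [coe_nnnorm] using lintegral_ofReal_le_of_transportCost_le hN R
    (lipschitzWith_shortfall π a) (shortfall_nonneg π a) hδ.le hc
end

section
/- Let π, R₀ ∈ ℝⁿ, a ∈ ℝ, and γ ≥ 0. If γ ≥ ‖π‖₂, then the supremum over Δ ∈ ℝⁿ of max(−⟪π, Δ + R₀⟫ − a, 0) − γ‖Δ‖₂ equals max(−⟪π, R₀⟫ − a, 0); if 0 ≤ γ < ‖π‖₂, then this supremum (taken in the extended reals) equals +∞. -/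
open scoped RealInnerProductSpace

/-- Conjugate of the positive-part function with an `L²`-norm penalty (proof of RMC-1,
Proposition 4.1): `sup_Δ { (−⟪π, Δ + R₀⟫ − a)⁺ − γ‖Δ‖₂ }` equals `(−⟪π, R₀⟫ − a)⁺`
if `γ ≥ ‖π‖₂`, and `+∞` (in the extended reals) if `0 ≤ γ < ‖π‖₂`. -/
theorem sup_posPart_norm_penalty (n : ℕ) (π R₀ : EuclideanSpace ℝ (Fin n)) (a γ : ℝ)
    (hγ : 0 ≤ γ) :
    (‖π‖ ≤ γ →
      (⨆ Δ : EuclideanSpace ℝ (Fin n),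
          ((max (-⟪π, Δ + R₀⟫ - a) 0 - γ * ‖Δ‖ : ℝ) : EReal)) =
        ((max (-⟪π, R₀⟫ - a) 0 : ℝ) : EReal)) ∧
    (γ < ‖π‖ →
      (⨆ Δ : EuclideanSpace ℝ (Fin n),
          ((max (-⟪π, Δ + R₀⟫ - a) 0 - γ * ‖Δ‖ : ℝ) : EReal)) = ⊤) := by
  constructor
  · intro h
    apply le_antisymm
    · apply iSup_le
      intro Δ
      apply EReal.coe_le_coe_iff.mpr
      have hb : -⟪π, Δ + R₀⟫ - a ≤ (-⟪π, R₀⟫ - a) + γ * ‖Δ‖ := by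
        rw [inner_add_right]
        have h1 : -⟪π, Δ⟫ ≤ ‖π‖ * ‖Δ‖ := by
          have := abs_real_inner_le_norm π Δ
          linarith [neg_abs_le ⟪π, Δ⟫, neg_le_abs ⟪π, Δ⟫]
        have h2 : ‖π‖ * ‖Δ‖ ≤ γ * ‖Δ‖ :=
          mul_le_mul_of_nonneg_right h (norm_nonneg _)
        linarith
      have hmax : max (-⟪π, Δ + R₀⟫ - a) 0 ≤ max (-⟪π, R₀⟫ - a) 0 + γ * ‖Δ‖ := by
        apply max_le
        · exact hb.trans (by linarith [le_max_left (-⟪π, R₀⟫ - a) (0:ℝ)])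
        · positivity
      linarith
    · have := le_iSup (fun Δ : EuclideanSpace ℝ (Fin n) =>
        ((max (-⟪π, Δ + R₀⟫ - a) 0 - γ * ‖Δ‖ : ℝ) : EReal)) (0 : EuclideanSpace ℝ (Fin n))
      simpa using this
  · intro h
    have hπ : 0 < ‖π‖ := lt_of_le_of_lt hγ h
    rw [iSup_eq_top]
    intro b hb
    obtain ⟨b', hbb', -⟩ := EReal.lt_iff_exists_real_btwn.mp hb
    · -- find t > 0 large
      set c : ℝ := ‖π‖ * (‖π‖ - γ)
      have hc : 0 < c := mul_pos hπ (by linarith)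
      obtain ⟨t, ht0, ht⟩ : ∃ t : ℝ, 0 ≤ t ∧ b' < t * c + (-⟪π, R₀⟫ - a) := by
        refine ⟨max 0 ((b' - (-⟪π, R₀⟫ - a) + 1) / c), le_max_left _ _, ?_⟩
        have : (b' - (-⟪π, R₀⟫ - a) + 1) / c ≤ max 0 ((b' - (-⟪π, R₀⟫ - a) + 1) / c) :=
          le_max_right _ _
        have h2 : b' - (-⟪π, R₀⟫ - a) + 1 ≤ max 0 ((b' - (-⟪π, R₀⟫ - a) + 1) / c) * c := by
          rw [← div_le_iff₀ hc] at *
          exact this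
        nlinarith
      refine ⟨(-t) • π, lt_trans hbb' ?_⟩
      apply EReal.coe_lt_coe_iff.mpr
      have hin : ⟪π, (-t) • π + R₀⟫ = -t * ‖π‖^2 + ⟪π, R₀⟫ := by
        rw [inner_add_right, inner_smul_right, real_inner_self_eq_norm_sq]
      have hnorm : ‖(-t) • π‖ = t * ‖π‖ := by
        rw [norm_smul]
        simp [abs_of_nonneg ht0]
      rw [hin, hnorm]
      have : -(-t * ‖π‖^2 + ⟪π, R₀⟫) - a - γ * (t * ‖π‖) = t * c + (-⟪π, R₀⟫ - a) := by
        simp only [c]; ring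
      calc b' < t * c + (-⟪π, R₀⟫ - a) := ht
        _ = -(-t * ‖π‖^2 + ⟪π, R₀⟫) - a - γ * (t * ‖π‖) := this.symm
        _ ≤ max (-(-t * ‖π‖^2 + ⟪π, R₀⟫) - a) 0 - γ * (t * ‖π‖) := by
            have := le_max_left (-(-t * ‖π‖^2 + ⟪π, R₀⟫) - a) (0:ℝ)
            linarith
end
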